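/- arXiv:2502.12564 — 2 statements merged into one kernel-verified Lean document; each statement's English description precedes it below -/
import Mathlib

section
/- For d ≥ 2, integers z_1,...,z_d ∈ {1,...,m} and thresholds i_1,...,i_d ∈ {0,...,m}: MReLU_{i_1,i_2,...,i_d}(z) − MReLU_{i_1+1,i_2,...,i_d}(z) = 𝟙[z_1 ≥ i_1+1] · ∏_{j=2}^d 𝟙[z_1 − z_j ≥ i_1 − i_j + 1], where MReLU_{i_1,...,i_d}(z_1,...,z_d) = max{z_1−i_1, ..., z_d−i_d, 0}. -/
/-!
Splitting off the first coordinate, `MReLU_i(z) = max(a, b)` with `a = z₁ - i₁` and `b ≥ 0` the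
maximum of the remaining terms and `0`; raising `i₁` by one turns this into `max(a - 1, b)`.
The two differ by `1` exactly when `b < a`, i.e. when `a > 0` and `a > z_j - i_j` for all `j ≥ 2`.
-/

/-- `MReLU` with integer thresholds `i : Fin n → ℤ` evaluated at `z : Fin n → ℤ`:
`max {z_1 - i_1, ..., z_n - i_n, 0}`. -/
def MReLU {n : ℕ} (i z : Fin n → ℤ) : ℤ :=
  ((Finset.univ.sup fun j => (z j - i j).toNat : ℕ) : ℤ)

open Finset

def MReLUExcept {n : ℕ} (k : Fin n) (i z : Fin n → ℤ) : ℤ :=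
  (((univ.erase k).sup fun j => (z j - i j).toNat : ℕ) : ℤ)

theorem Int.max_sub_max_sub_one (a b : ℤ) :
    max a b - max (a - 1) b = if b < a then 1 else 0 := by
  split_ifs <;> omega

section

variable {n : ℕ} (k : Fin n) (i z : Fin n → ℤ)

theorem MReLUExcept_nonneg : 0 ≤ MReLUExcept k i z :=
  Int.natCast_nonneg _

theorem MReLU_eq_max_MReLUExcept : MReLU i z = max (z k - i k) (MReLUExcept k i z) := by
  have hb := MReLUExcept_nonneg k i z
  rw [MReLU, ← insert_erase (mem_univ k), sup_insert, Nat.cast_max]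
  unfold MReLUExcept at hb ⊢
  omega

theorem MReLUExcept_update (c : ℤ) :
    MReLUExcept k (Function.update i k c) z = MReLUExcept k i z := by
  unfold MReLUExcept
  congr 1
  refine sup_congr rfl fun j hj => ?_
  rw [Function.update_of_ne (ne_of_mem_erase hj)]

theorem MReLUExcept_lt_iff {a : ℤ} :
    MReLUExcept k i z < a ↔ 0 < a ∧ ∀ j ≠ k, z j - i j < a := by
  rcases le_or_gt a 0 with ha | ha
  · have := MReLUExcept_nonneg k i z
    constructor <;> intro h <;> omega
  · have hsup : ((univ.erase k).sup fun j => (z j - i j).toNat) < a.toNat ↔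
        ∀ j ≠ k, (z j - i j).toNat < a.toNat := by
      rw [Finset.sup_lt_iff (by simpa using ha)]
      simp only [mem_erase, mem_univ, and_true]
    simp only [Int.toNat_lt_toNat ha] at hsup
    rw [MReLUExcept, ← hsup]
    omega

end

theorem mrelu_difference_eq_hyperrectangle_indicator_general (d' : ℕ)
    (z i : Fin (d' + 2) → ℤ) :
    MReLU i z - MReLU (Function.update i 0 (i 0 + 1)) z =
      (if i 0 + 1 ≤ z 0 then (1 : ℤ) else 0) *
        ∏ j ∈ Finset.univ.filter (fun j => j ≠ (0 : Fin (d' + 2))),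
          (if i 0 - i j + 1 ≤ z 0 - z j then (1 : ℤ) else 0) := by
  rw [MReLU_eq_max_MReLUExcept 0, MReLU_eq_max_MReLUExcept 0, MReLUExcept_update,
    Function.update_self, prod_boole, ite_zero_mul_ite_zero, mul_one,
    sub_add_eq_sub_sub, Int.max_sub_max_sub_one]
  have hcorner : MReLUExcept 0 i z < z 0 - i 0 ↔
      i 0 + 1 ≤ z 0 ∧ ∀ j ∈ univ.filter (· ≠ (0 : Fin (d' + 2))), i 0 - i j + 1 ≤ z 0 - z j := by
    rw [MReLUExcept_lt_iff]
    simp only [mem_filter, mem_univ, true_and]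
    exact and_congr (by omega) (forall₂_congr fun j _ => by omega)
  simp only [hcorner]
  congr

/-- For `d ≥ 2` (here `d = d' + 2`), the discrete difference of `MReLU` in the first
threshold coordinate is a hyperrectangle indicator:
`MReLU_{i_1,...,i_d}(z) − MReLU_{i_1+1,i_2,...,i_d}(z)
  = 𝟙[z_1 ≥ i_1+1] · ∏_{j=2}^d 𝟙[z_1 − z_j ≥ i_1 − i_j + 1]`. -/
theorem mrelu_difference_eq_hyperrectangle_indicator (d' m : ℕ)
    (z i : Fin (d' + 2) → ℤ)
    (hz : ∀ j, 1 ≤ z j ∧ z j ≤ (m : ℤ)) (hi : ∀ j, 0 ≤ i j ∧ i j ≤ (m : ℤ)) :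
    MReLU i z - MReLU (Function.update i 0 (i 0 + 1)) z =
      (if i 0 + 1 ≤ z 0 then (1 : ℤ) else 0) *
        ∏ j ∈ Finset.univ.filter (fun j => j ≠ (0 : Fin (d' + 2))),
          (if i 0 - i j + 1 ≤ z 0 - z j then (1 : ℤ) else 0) :=
  mrelu_difference_eq_hyperrectangle_indicator_general d' z i
end

section
/- Fix a finite action set A, a loss ℓ : A × Y → [0,1] linear and L-Lipschitz (ℓ∞) in its second argument with Y ⊆ [0,1]^d, predictions p_1,...,p_T ∈ Y, outcomes y_1,...,y_T ∈ Y, and actions a_t ∈ A. Suppose that for every a ∈ A, ‖∑_{t : a_t = a} (p_t − y_t)‖_∞ ≤ β(T(a)) where T(a) = #{t : a_t = a} and β is concave and nondecreasing with β(0) ≥ 0. Then |∑_{t=1}^T (ℓ(a_t, p_t) − ℓ(a_t, y_t))| ≤ L·|A|·β(T/|A|). -/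
/-!
Grouping the rounds by the action taken, linearity of the loss turns the rounds with action `a`
into a single loss gap `ℓ(a, ∑ p_t) - ℓ(a, ∑ y_t)`, which the Lipschitz bound and the
calibration hypothesis control by `L · β(T(a))`. Since the counts `T(a)` add up to `T`,
Jensen's inequality for the concave `β` bounds `∑_a β(T(a))` by `|A| · β(T / |A|)`.
-/

open Finset

theorem ConcaveOn.sum_le_card_mul_map_average {ι E : Type*} [AddCommGroup E] [Module ℝ E]
    {D : Set E} {f : E → ℝ} (hf : ConcaveOn ℝ D f) {s : Finset ι} (hs : s.Nonempty)
    {x : ι → E} (hx : ∀ i ∈ s, x i ∈ D) :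
    ∑ i ∈ s, f (x i) ≤ #s * f ((#s : ℝ)⁻¹ • ∑ i ∈ s, x i) := by
  have hcard : (0 : ℝ) < #s := by exact_mod_cast hs.card_pos
  have hjensen := hf.le_map_sum (w := fun _ => (#s : ℝ)⁻¹) (fun _ _ => by positivity)
    (by simp [hcard.ne']) hx
  rw [← smul_sum, ← smul_sum, smul_eq_mul] at hjensen
  calc ∑ i ∈ s, f (x i) = #s * ((#s : ℝ)⁻¹ * ∑ i ∈ s, f (x i)) := by field_simp
    _ ≤ #s * f ((#s : ℝ)⁻¹ • ∑ i ∈ s, x i) := by gcongr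

theorem sum_card_fiber_eq_card {ι κ : Type*} [Fintype ι] [Fintype κ] [DecidableEq κ]
    (g : ι → κ) : ∑ j, (#{i | g i = j} : ℝ) = Fintype.card ι := by
  simpa using congrArg (Nat.cast (R := ℝ)) (sum_fiberwise univ g fun _ => 1)

theorem sum_linear_gap_eq {τ ι : Type*} [Fintype ι] (r : ι → ℝ)
    (s : Finset τ) (p y : τ → ι → ℝ) :
    ∑ t ∈ s, (∑ i, r i * p t i - ∑ i, r i * y t i) =
      ∑ i, r i * ∑ t ∈ s, p t i - ∑ i, r i * ∑ t ∈ s, y t i := by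
  simp only [sum_sub_distrib, mul_sum]
  rw [sum_comm (s := s), sum_comm (s := s)]

theorem abs_sum_linear_gap_le {τ ι : Type*} [Fintype ι] {L : ℝ} {r : ι → ℝ}
    (hlip : ∀ y y' : ι → ℝ, |∑ i, r i * y i - ∑ i, r i * y' i| ≤ L * ⨆ i, |y i - y' i|)
    (s : Finset τ) (p y : τ → ι → ℝ) :
    |∑ t ∈ s, (∑ i, r i * p t i - ∑ i, r i * y t i)| ≤
      L * ⨆ i, |∑ t ∈ s, (p t i - y t i)| := by
  rw [sum_linear_gap_eq]
  simp only [sum_sub_distrib]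
  exact hlip (fun i => ∑ t ∈ s, p t i) (fun i => ∑ t ∈ s, y t i)

theorem decision_calibration_linear_loss_bound_general (d T : ℕ) (A : Type) [Fintype A] [DecidableEq A]
    [Nonempty A] (L : ℝ) (hL : 0 ≤ L)
    (r : A → Fin d → ℝ)
    (hlip : ∀ (a : A) (y y' : Fin d → ℝ),
      |∑ i, r a i * y i - ∑ i, r a i * y' i| ≤ L * ⨆ i, |y i - y' i|)
    (p yv : Fin T → Fin d → ℝ)
    (act : Fin T → A)
    (β : ℝ → ℝ) (hconc : ConcaveOn ℝ Set.univ β)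
    (hcal : ∀ a : A,
      (⨆ i, |∑ t ∈ Finset.univ.filter (fun t => act t = a), (p t i - yv t i)|) ≤
        β ((Finset.univ.filter (fun t => act t = a)).card)) :
    |∑ t, ((∑ i, r (act t) i * p t i) - ∑ i, r (act t) i * yv t i)| ≤
      L * Fintype.card A * β ((T : ℝ) / Fintype.card A) := by
  have hjensen := hconc.sum_le_card_mul_map_average univ_nonempty
    (x := fun a => (#{t | act t = a} : ℝ)) (fun _ _ => Set.mem_univ _)
  rw [sum_card_fiber_eq_card, Fintype.card_fin, card_univ, smul_eq_mul, inv_mul_eq_div]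
    at hjensen
  calc |∑ t, ((∑ i, r (act t) i * p t i) - ∑ i, r (act t) i * yv t i)|
      = |∑ a, ∑ t ∈ {t | act t = a}, ((∑ i, r a i * p t i) - ∑ i, r a i * yv t i)| := by
        rw [← sum_fiberwise univ act]
        congr 1
        refine sum_congr rfl fun a _ => sum_congr rfl fun t ht => ?_
        rw [(mem_filter.mp ht).2]
    _ ≤ ∑ a, |∑ t ∈ {t | act t = a}, ((∑ i, r a i * p t i) - ∑ i, r a i * yv t i)| :=
        abs_sum_le_sum_abs _ _
    _ ≤ ∑ a, L * β #{t | act t = a} := by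
        gcongr with a
        exact (abs_sum_linear_gap_le (hlip a) _ p yv).trans
          (mul_le_mul_of_nonneg_left (hcal a) hL)
    _ ≤ L * Fintype.card A * β ((T : ℝ) / Fintype.card A) := by
        rw [← mul_sum, mul_assoc]
        exact mul_le_mul_of_nonneg_left hjensen hL

/-- Decision calibration implies accurate loss estimates for linear losses:
if the predictions are conditionally unbiased on each chosen action (with concave,
nondecreasing error bound `β`), then the total gap between predicted and realized linear
`L`-Lipschitz losses is at most `L·|A|·β(T/|A|)`. -/
theorem decision_calibration_linear_loss_bound (d T : ℕ) (A : Type) [Fintype A] [DecidableEq A]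
    [Nonempty A] (L : ℝ) (hL : 0 ≤ L)
    (r : A → Fin d → ℝ)
    (hlip : ∀ (a : A) (y y' : Fin d → ℝ),
      |∑ i, r a i * y i - ∑ i, r a i * y' i| ≤ L * ⨆ i, |y i - y' i|)
    (hrange : ∀ (a : A) (y : Fin d → ℝ), (∀ i, y i ∈ Set.Icc (0 : ℝ) 1) →
      (∑ i, r a i * y i) ∈ Set.Icc (0 : ℝ) 1)
    (p yv : Fin T → Fin d → ℝ)
    (hp : ∀ t i, p t i ∈ Set.Icc (0 : ℝ) 1)
    (hy : ∀ t i, yv t i ∈ Set.Icc (0 : ℝ) 1)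
    (act : Fin T → A)
    (β : ℝ → ℝ) (hconc : ConcaveOn ℝ Set.univ β) (hmono : Monotone β)
    (hβ0 : 0 ≤ β 0)
    (hcal : ∀ a : A,
      (⨆ i, |∑ t ∈ Finset.univ.filter (fun t => act t = a), (p t i - yv t i)|) ≤
        β ((Finset.univ.filter (fun t => act t = a)).card)) :
    |∑ t, ((∑ i, r (act t) i * p t i) - ∑ i, r (act t) i * yv t i)| ≤
      L * Fintype.card A * β ((T : ℝ) / Fintype.card A) :=
  decision_calibration_linear_loss_bound_general d T A L hL r hlip p yv act β hconc hcal
end
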